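/- For 0 < r < 1, the function Φ_r(x) = Arg(1 + r e^{ix}) is concave on the interval (0, π). -/

import Mathlib

open Real Complex

private noncomputable def phiF (r : ℝ) (x : ℝ) : ℝ :=
  Real.arctan (r * Real.sin x / (1 + r * Real.cos x))

private noncomputable def phiD (r : ℝ) (x : ℝ) : ℝ :=
  (r * Real.cos x + r ^ 2) / (1 + 2 * r * Real.cos x + r ^ 2)

private lemma den_pos {r : ℝ} (hr0 : 0 < r) (hr1 : r < 1) (x : ℝ) :
    0 < 1 + r * Real.cos x := by
  nlinarith [Real.neg_one_le_cos x, Real.cos_le_one x]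

private lemma den2_pos {r : ℝ} (hr0 : 0 < r) (hr1 : r < 1) (x : ℝ) :
    0 < 1 + 2 * r * Real.cos x + r ^ 2 := by
  nlinarith [Real.neg_one_le_cos x, Real.cos_le_one x]

private lemma hasDerivAt_phiF {r : ℝ} (hr0 : 0 < r) (hr1 : r < 1) (x : ℝ) :
    HasDerivAt (phiF r) (phiD r x) x := by
  have hd : (1 + r * Real.cos x) ≠ 0 := (den_pos hr0 hr1 x).ne'
  have hd2 : (1 + 2 * r * Real.cos x + r ^ 2) ≠ 0 := (den2_pos hr0 hr1 x).ne'
  have h1 : HasDerivAt (fun x : ℝ => r * Real.sin x / (1 + r * Real.cos x))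
      ((r * Real.cos x * (1 + r * Real.cos x) - r * Real.sin x * (r * -Real.sin x)) /
        (1 + r * Real.cos x) ^ 2) x :=
    (((Real.hasDerivAt_sin x).const_mul r).div
      (((Real.hasDerivAt_cos x).const_mul r).const_add 1) hd)
  have h2 := h1.arctan
  convert h2 using 1
  · rfl
  unfold phiD
  have hs : Real.sin x ^ 2 = 1 - Real.cos x ^ 2 := Real.sin_sq x
  have hq : (1 + (r * Real.sin x / (1 + r * Real.cos x)) ^ 2) ≠ 0 := by positivity
  have key : 1 + (r * Real.sin x / (1 + r * Real.cos x)) ^ 2 =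
      (1 + 2 * r * Real.cos x + r ^ 2) / (1 + r * Real.cos x) ^ 2 := by
    rw [div_pow, one_add_div (pow_ne_zero 2 hd)]
    congr 1
    linear_combination r ^ 2 * hs
  rw [key, one_div_div, div_mul_div_comm,
    div_eq_div_iff hd2 (mul_ne_zero hd2 (pow_ne_zero 2 hd))]
  linear_combination (-(r ^ 2) * (1 + 2 * r * Real.cos x + r ^ 2) * (1 + r * Real.cos x) ^ 2) * hs

private lemma hasDerivAt_phiD {r : ℝ} (hr0 : 0 < r) (hr1 : r < 1) (x : ℝ) :
    HasDerivAt (phiD r)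
      (r * Real.sin x * (r ^ 2 - 1) / (1 + 2 * r * Real.cos x + r ^ 2) ^ 2) x := by
  have hd : (1 + 2 * r * Real.cos x + r ^ 2) ≠ 0 := (den2_pos hr0 hr1 x).ne'
  have h1 : HasDerivAt (fun x : ℝ => (r * Real.cos x + r ^ 2) / (1 + 2 * r * Real.cos x + r ^ 2))
      ((r * -Real.sin x * (1 + 2 * r * Real.cos x + r ^ 2) -
        (r * Real.cos x + r ^ 2) * (2 * r * -Real.sin x)) /
        (1 + 2 * r * Real.cos x + r ^ 2) ^ 2) x :=
    (((Real.hasDerivAt_cos x).const_mul r).add_const (r ^ 2)).div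
      ((((Real.hasDerivAt_cos x).const_mul (2 * r)).const_add 1).add_const (r ^ 2)) hd
  convert h1 using 1
  · rfl
  field_simp
  ring

theorem phi_concave (r : ℝ) (hr0 : 0 < r) (hr1 : r < 1) :
    ConcaveOn ℝ (Set.Ioo (0 : ℝ) π)
      (fun x : ℝ => (1 + (r : ℂ) * Complex.exp (x * Complex.I)).arg) := by
  have hF : ConcaveOn ℝ (Set.Ioo (0 : ℝ) π) (phiF r) := by
    have hdiff : ∀ x : ℝ, HasDerivAt (phiF r) (phiD r x) x := hasDerivAt_phiF hr0 hr1
    have hderiv : deriv (phiF r) = phiD r := funext fun x => (hdiff x).deriv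
    apply concaveOn_of_deriv2_nonpos (convex_Ioo 0 π)
      (fun x _ => ((hdiff x).continuousAt).continuousWithinAt)
      (fun x _ => ((hdiff x).differentiableAt).differentiableWithinAt)
    · intro x _
      rw [hderiv]
      exact ((hasDerivAt_phiD hr0 hr1 x).differentiableAt).differentiableWithinAt
    · intro x hx
      rw [interior_Ioo] at hx
      have h2 : deriv^[2] (phiF r) x = r * Real.sin x * (r ^ 2 - 1) /
          (1 + 2 * r * Real.cos x + r ^ 2) ^ 2 := by
        simp only [Function.iterate_succ, Function.iterate_zero, Function.comp_apply, id_eq]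
        rw [hderiv]
        exact (hasDerivAt_phiD hr0 hr1 x).deriv
      rw [h2]
      have hs : 0 < Real.sin x := Real.sin_pos_of_pos_of_lt_pi hx.1 hx.2
      have hpos := den2_pos hr0 hr1 x
      apply div_nonpos_of_nonpos_of_nonneg
      · exact mul_nonpos_of_nonneg_of_nonpos (mul_pos hr0 hs).le (by nlinarith)
      · positivity
  refine hF.congr fun x hx => ?_
  show phiF r x = _
  have hre' : (1 + (r : ℂ) * Complex.exp (x * Complex.I)).re = 1 + r * Real.cos x := by
    simp [Complex.add_re, Complex.mul_re, Complex.exp_ofReal_mul_I_re,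
      Complex.exp_ofReal_mul_I_im]
  have him : (1 + (r : ℂ) * Complex.exp (x * Complex.I)).im = r * Real.sin x := by
    simp [Complex.add_im, Complex.mul_im, Complex.exp_ofReal_mul_I_re,
      Complex.exp_ofReal_mul_I_im]
  have hre : 0 < (1 + (r : ℂ) * Complex.exp (x * Complex.I)).re := by
    rw [hre']; exact den_pos hr0 hr1 x
  have habs := Complex.abs_arg_lt_pi_div_two_iff.mpr
    (Or.inl hre : 0 < (1 + (r : ℂ) * Complex.exp (x * Complex.I)).re ∨ _)
  rw [abs_lt] at habs
  have ht := Complex.tan_arg (1 + (r : ℂ) * Complex.exp (x * Complex.I))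
  rw [him, hre'] at ht
  unfold phiF
  rw [← ht, Real.arctan_tan habs.1 habs.2]
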